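/- Let P and Q be orthogonal projections on a Hilbert space H. Then the commutator [P, Q] = PQ − QP is compact if and only if the operator PQ(I−P)Q P (equivalently, PQP − (PQP)²) is compact, which holds if and only if the essential spectrum of PQP restricted to the relevant summand is contained in {0, 1}. -/

import Mathlib

/-!
Put `A = PQ(1 - P)`. Then `P [P, Q] = A`, `[P, Q] = A - A⋆` and `A A⋆ = PQP - (PQP)²`, so the
first equivalence says that `A` is compact iff `A A⋆` is; this follows from
`‖A⋆ x‖² ≤ ‖A A⋆ x‖ ‖x‖`, which makes `A⋆` compact when `A A⋆` is.

For the self-adjoint `T = PQP`: if `T - T²` is compact, then for `z ≠ 0, 1` the operator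
`(z - 1)⁻¹ T + z⁻¹ (1 - T)` inverts `z - T` modulo compacts. Conversely, the `g ∈ C(σ(T), ℝ)` with
`g(T)` compact form a closed ideal, so they are exactly the functions vanishing on some closed set,
and it suffices to produce, at each `λ` outside the essential spectrum, such a `g` with `g(λ) ≠ 0`.
If `S (λ - T) - 1` is compact, a bump `f` at `λ` of width less than `‖S‖⁻¹` does it: then
`(λ - T) f(T) = r(T) f(T)` with `‖S r(T)‖ < 1`, and `(1 - S r(T)) f(T)` is compact.
-/

/-- An operator is invertible modulo the compact operators, i.e. its image in the Calkin
algebra `B(H)/K(H)` is invertible. -/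
def CalkinInvertible {H : Type*} [NormedAddCommGroup H] [InnerProductSpace ℂ H]
    [CompleteSpace H] (T : H →L[ℂ] H) : Prop :=
  ∃ S : H →L[ℂ] H, IsCompactOperator ⇑(T * S - 1) ∧ IsCompactOperator ⇑(S * T - 1)

/-- The essential spectrum of `T`: the spectrum of the image of `T` in the Calkin algebra. -/
def essentialSpectrum {H : Type*} [NormedAddCommGroup H] [InnerProductSpace ℂ H]
    [CompleteSpace H] (T : H →L[ℂ] H) : Set ℂ :=
  {z | ¬ CalkinInvertible (algebraMap ℂ (H →L[ℂ] H) z - T)}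

open Set Metric

theorem TotallyBounded.image_of_dist_sq_le {α β γ : Type*} [PseudoMetricSpace β]
    [PseudoMetricSpace γ] {f : α → β} {g : α → γ} {s : Set α} (C : ℝ)
    (hfg : ∀ u ∈ s, ∀ v ∈ s, dist (g u) (g v) ^ 2 ≤ C * dist (f u) (f v))
    (hf : TotallyBounded (f '' s)) : TotallyBounded (g '' s) := by
  rw [Metric.totallyBounded_iff]
  intro ε hε
  set δ := ε ^ 2 / (|C| + 1)
  obtain ⟨t, hts, htfin, hcover⟩ : ∃ t ⊆ s, t.Finite ∧ f '' s ⊆ ⋃ y ∈ f '' t, ball y δ :=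
    exists_subset_image_finite_and.1 (finite_approx_of_totallyBounded hf δ (by positivity))
  refine ⟨g '' t, htfin.image g, ?_⟩
  rintro _ ⟨u, hu, rfl⟩
  obtain ⟨_, ⟨v, hv, rfl⟩, huv⟩ := mem_iUnion₂.1 (hcover (mem_image_of_mem f hu))
  refine mem_iUnion₂.2 ⟨g v, mem_image_of_mem g hv, mem_ball.2 ?_⟩
  have hCδ : |C| * δ < ε ^ 2 := by
    rw [mul_div_assoc', div_lt_iff₀ (by positivity)]
    nlinarith [abs_nonneg C, pow_pos hε 2]
  have : dist (g u) (g v) ^ 2 < ε ^ 2 := calc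
    _ ≤ C * dist (f u) (f v) := hfg u hu v (hts hv)
    _ ≤ |C| * δ := mul_le_mul (le_abs_self C) (mem_ball.1 huv).le dist_nonneg (abs_nonneg C)
    _ < ε ^ 2 := hCδ
  exact lt_of_pow_lt_pow_left₀ 2 hε.le this

namespace ContinuousLinearMap

variable {𝕜 E : Type*} [RCLike 𝕜] [NormedAddCommGroup E] [InnerProductSpace 𝕜 E] [CompleteSpace E]

theorem norm_star_apply_sq_le (A : E →L[𝕜] E) (x : E) :
    ‖star A x‖ ^ 2 ≤ ‖(A * star A) x‖ * ‖x‖ := by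
  rw [star_eq_adjoint, apply_norm_sq_eq_inner_adjoint_right, adjoint_adjoint, mul_comm]
  exact (RCLike.re_le_norm _).trans (norm_inner_le_norm _ _)

theorem isCompactOperator_star_of_mul_star {A : E →L[𝕜] E}
    (h : IsCompactOperator ⇑(A * star A)) : IsCompactOperator ⇑(star A) := by
  refine (isCompactOperator_iff_isCompact_closure_image_closedBall
    ((star A : E →L[𝕜] E) : E →ₗ[𝕜] E) one_pos).2 ?_
  refine TotallyBounded.isCompact_of_isClosed (TotallyBounded.closure ?_) isClosed_closure
  refine TotallyBounded.image_of_dist_sq_le (f := A * star A) 2 (fun u hu v hv => ?_)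
    ((h.isCompact_closure_image_closedBall 1).totallyBounded.subset subset_closure)
  have huv : ‖u - v‖ ≤ 2 := by
    rw [mem_closedBall_zero_iff] at hu hv
    linarith [norm_sub_le u v]
  simp only [dist_eq_norm, coe_coe, ← map_sub]
  calc ‖star A (u - v)‖ ^ 2 ≤ ‖(A * star A) (u - v)‖ * ‖u - v‖ := norm_star_apply_sq_le A _
    _ ≤ 2 * ‖(A * star A) (u - v)‖ := by
      rw [mul_comm]; exact mul_le_mul_of_nonneg_right huv (norm_nonneg _)

theorem isCompactOperator_star_iff {A : E →L[𝕜] E} :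
    IsCompactOperator ⇑(star A) ↔ IsCompactOperator A :=
  ⟨fun h => by
    have hAA : IsCompactOperator ⇑(star A * star (star A)) := by
      rw [star_star]; exact h.comp_clm A
    simpa using isCompactOperator_star_of_mul_star hAA,
    fun h => isCompactOperator_star_of_mul_star (h.comp_clm (star A))⟩

theorem isCompactOperator_mul_star_iff {A : E →L[𝕜] E} :
    IsCompactOperator ⇑(A * star A) ↔ IsCompactOperator A :=
  ⟨fun h => isCompactOperator_star_iff.1 (isCompactOperator_star_of_mul_star h),
    fun h => h.comp_clm (star A)⟩

end ContinuousLinearMap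

section CompactOperatorIdeal

variable (𝕜 E : Type*) [NontriviallyNormedField 𝕜] [NormedAddCommGroup E] [NormedSpace 𝕜 E]

def compactOperatorIdeal : Ideal (E →L[𝕜] E) where
  carrier := {A | IsCompactOperator A}
  add_mem' := IsCompactOperator.add
  zero_mem' := isCompactOperator_zero
  smul_mem' B _ hA := hA.clm_comp B

theorem isClosed_compactOperatorIdeal [CompleteSpace E] :
    IsClosed (compactOperatorIdeal 𝕜 E : Set (E →L[𝕜] E)) :=
  isClosed_setOfPred_isCompactOperator

end CompactOperatorIdeal

section EssentialSpectrum

variable {H : Type*} [NormedAddCommGroup H] [InnerProductSpace ℂ H] [CompleteSpace H]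

theorem essentialSpectrum_subset_of_isCompactOperator_sub_mul_self {T : H →L[ℂ] H}
    (h : IsCompactOperator ⇑(T - T * T)) : essentialSpectrum T ⊆ {0, 1} := by
  intro z hz
  by_contra h01
  simp only [mem_insert_iff, mem_singleton_iff, not_or] at h01
  obtain ⟨hz0, hz1⟩ := h01
  set S : H →L[ℂ] H := (z - 1)⁻¹ • T + z⁻¹ • (1 - T)
  have hleft : (algebraMap ℂ _ z - T) * S - 1 = (z⁻¹ - (z - 1)⁻¹) • (T * T - T) := by
    simp only [S, Algebra.algebraMap_eq_smul_one, mul_add, sub_mul, mul_sub, smul_mul_assoc,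
      mul_smul_comm, mul_one, one_mul]
    match_scalars <;> field_simp <;> ring
  have hcomm : S * (algebraMap ℂ _ z - T) = (algebraMap ℂ _ z - T) * S := by
    simp only [S, Algebra.algebraMap_eq_smul_one, mul_add, add_mul, sub_mul, mul_sub,
      smul_mul_assoc, mul_smul_comm, mul_one, one_mul]
    match_scalars <;> ring
  have hK : IsCompactOperator ⇑((z⁻¹ - (z - 1)⁻¹) • (T * T - T)) := by
    rw [← neg_sub T (T * T)]
    exact h.neg.smul (z⁻¹ - (z - 1)⁻¹)
  exact hz ⟨S, hleft ▸ hK, hcomm ▸ hleft ▸ hK⟩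

theorem IsSelfAdjoint.exists_isCompactOperator_cfc_ne_zero {T : H →L[ℂ] H} (hT : IsSelfAdjoint T)
    {l : ℝ} {S : H →L[ℂ] H} (hS : IsCompactOperator ⇑(S * (algebraMap ℝ _ l - T) - 1)) :
    ∃ f : ℝ → ℝ, Continuous f ∧ f l ≠ 0 ∧ IsCompactOperator ⇑(cfc f T) := by
  set δ : ℝ := (‖S‖ + 1)⁻¹
  have hδ : 0 < δ := by positivity
  set f : ℝ → ℝ := fun x => max 0 (δ - |x - l|)
  set r : ℝ → ℝ := fun x => max (-δ) (min δ (l - x))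
  refine ⟨f, by fun_prop, by simpa [f] using hδ, ?_⟩
  have hrf : ∀ x, r x * f x = (l - x) * f x := by
    intro x
    rcases lt_or_ge |x - l| δ with hx | hx
    · rw [abs_lt] at hx
      simp only [r, min_eq_right (by linarith : l - x ≤ δ), max_eq_right (by linarith : -δ ≤ l - x)]
    · simp [f, hx]
  have hmul : cfc r T * cfc f T = (algebraMap ℝ _ l - T) * cfc f T := by
    have hL : algebraMap ℝ _ l - T = cfc (fun x : ℝ => l - x) T := by
      rw [cfc_sub _ _ T, cfc_const l T, cfc_id' ℝ T]
    rw [hL, ← cfc_mul r f T, ← cfc_mul (fun x : ℝ => l - x) f T]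
    exact cfc_congr fun x _ => hrf x
  have hr : ‖S * cfc r T‖ < 1 := by
    have hrT : ‖cfc r T‖ ≤ δ := norm_cfc_le hδ.le fun x _ =>
      abs_le.2 ⟨le_max_left _ _, max_le (by linarith) (min_le_left _ _)⟩
    calc ‖S * cfc r T‖ ≤ ‖S‖ * δ := (norm_mul_le _ _).trans (by gcongr)
      _ < 1 := by rw [mul_inv_lt_iff₀ (by positivity)]; linarith
  have hK : IsCompactOperator ⇑((1 - S * cfc r T) * cfc f T) := by
    have : (1 - S * cfc r T) * cfc f T = -((S * (algebraMap ℝ _ l - T) - 1) * cfc f T) := by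
      rw [sub_mul, mul_assoc, hmul]; noncomm_ring
    rw [this]
    exact (hS.comp_clm _).neg
  have hu : cfc f T = ↑(Units.oneSub _ hr)⁻¹ * ((1 - S * cfc r T) * cfc f T) := by
    rw [← Units.val_oneSub _ hr, ← mul_assoc, Units.inv_mul, one_mul]
  rw [hu]
  exact hK.clm_comp _

theorem IsSelfAdjoint.isCompactOperator_cfc {T : H →L[ℂ] H} (hT : IsSelfAdjoint T)
    {g : ℝ → ℝ} (hg : ContinuousOn g (spectrum ℝ T))
    (hg_ess : ∀ x ∈ spectrum ℝ T, (x : ℂ) ∈ essentialSpectrum T → g x = 0) :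
    IsCompactOperator ⇑(cfc g T) := by
  set I := (compactOperatorIdeal ℂ H).comap (cfcHom (R := ℝ) hT)
  have hI : IsClosed (I : Set C(spectrum ℝ T, ℝ)) :=
    (isClosed_compactOperatorIdeal ℂ H).preimage (cfcHom_isClosedEmbedding hT).continuous
  rw [cfc_apply g T hT hg]
  change ⟨_, hg.domRestrict⟩ ∈ I
  -- A closed ideal of `C(X, ℝ)` consists of the functions vanishing on its common zero set.
  rw [← ContinuousMap.idealOfSet_ofIdeal_isClosed hI, ContinuousMap.mem_idealOfSet]
  intro x hx
  by_contra hgx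
  refine hx (ContinuousMap.mem_setOfIdeal.2 ?_)
  obtain ⟨S, -, hS⟩ : CalkinInvertible (algebraMap ℂ _ (x : ℂ) - T) :=
    not_not.1 (mt (hg_ess x x.2) hgx)
  rw [← Complex.coe_algebraMap, ← IsScalarTower.algebraMap_apply] at hS
  obtain ⟨f, hf, hfx, hfT⟩ := hT.exists_isCompactOperator_cfc_ne_zero hS
  rw [cfc_apply f T hT hf.continuousOn] at hfT
  exact ⟨⟨_, hf.continuousOn.domRestrict⟩, hfT, hfx⟩

theorem IsSelfAdjoint.isCompactOperator_sub_mul_self_iff {T : H →L[ℂ] H} (hT : IsSelfAdjoint T) :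
    IsCompactOperator ⇑(T - T * T) ↔ essentialSpectrum T ⊆ {0, 1} := by
  refine ⟨essentialSpectrum_subset_of_isCompactOperator_sub_mul_self, fun h => ?_⟩
  have hcfc : T - T * T = cfc (fun x : ℝ => x - x * x) T := by
    rw [cfc_sub _ _ T, cfc_mul _ _ T, cfc_id' ℝ T]
  rw [hcfc]
  refine hT.isCompactOperator_cfc (by fun_prop) fun x _ hx => ?_
  obtain rfl | rfl : x = 0 ∨ x = 1 := by simpa using h hx
  all_goals norm_num

end EssentialSpectrum

section Projections

variable {R : Type*} [Ring R] {P Q : R}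

theorem mul_commutator_eq_mul_mul_one_sub (hP : IsIdempotentElem P) :
    P * (P * Q - Q * P) = P * Q * (1 - P) := by
  rw [mul_sub, ← mul_assoc, hP.eq, mul_one_sub, mul_assoc]

variable [StarRing R]

theorem commutator_eq_sub_star (hP : IsSelfAdjoint P) (hQ : IsSelfAdjoint Q) :
    P * Q - Q * P = P * Q * (1 - P) - star (P * Q * (1 - P)) := by
  simp only [star_mul, star_sub, star_one, hP.star_eq, hQ.star_eq]
  noncomm_ring

theorem mul_mul_one_sub_mul_star (hP : IsSelfAdjoint P) (hP2 : IsIdempotentElem P)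
    (hQ : IsSelfAdjoint Q) (hQ2 : IsIdempotentElem Q) :
    P * Q * (1 - P) * star (P * Q * (1 - P)) = P * Q * P - P * Q * P * (P * Q * P) := by
  simp only [star_mul, star_sub, star_one, hP.star_eq, hQ.star_eq]
  have hP' : ∀ X : R, P * (P * X) = P * X := fun X => by rw [← mul_assoc, hP2.eq]
  have hQ' : ∀ X : R, Q * (Q * X) = Q * X := fun X => by rw [← mul_assoc, hQ2.eq]
  simp only [mul_sub, sub_mul, mul_one, one_mul, mul_assoc, hP', hQ']
  abel

end Projections

theorem isCompactOperator_commutator_iff {𝕜 E : Type*} [RCLike 𝕜] [NormedAddCommGroup E]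
    [InnerProductSpace 𝕜 E] [CompleteSpace E] {P Q : E →L[𝕜] E} (hP : IsSelfAdjoint P)
    (hP2 : IsIdempotentElem P) (hQ : IsSelfAdjoint Q) :
    IsCompactOperator ⇑(P * Q - Q * P) ↔ IsCompactOperator ⇑(P * Q * (1 - P)) := by
  refine ⟨fun h => ?_, fun h => ?_⟩
  · rw [← mul_commutator_eq_mul_mul_one_sub hP2]
    exact h.clm_comp P
  · rw [commutator_eq_sub_star hP hQ]
    exact h.sub (ContinuousLinearMap.isCompactOperator_star_iff.2 h)

/-- For orthogonal projections `P`, `Q` on a Hilbert space: the commutator `[P,Q] = PQ - QP` is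
compact if and only if `PQP - (PQP)²` (equivalently `PQ(I-P)QP`) is compact, which in turn
holds if and only if the essential spectrum of `PQP` is contained in `{0, 1}`. -/
theorem commutator_compact_iff {H : Type*} [NormedAddCommGroup H]
    [InnerProductSpace ℂ H] [CompleteSpace H] (P Q : H →L[ℂ] H)
    (hPsa : IsSelfAdjoint P) (hP2 : P * P = P)
    (hQsa : IsSelfAdjoint Q) (hQ2 : Q * Q = Q) :
    (IsCompactOperator ⇑(P * Q - Q * P) ↔
      IsCompactOperator ⇑(P * Q * P - (P * Q * P) * (P * Q * P))) ∧
    (IsCompactOperator ⇑(P * Q * P - (P * Q * P) * (P * Q * P)) ↔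
      essentialSpectrum (P * Q * P) ⊆ {0, 1}) := by
  refine ⟨?_, (hQsa.conjugate_self hPsa).isCompactOperator_sub_mul_self_iff⟩
  rw [isCompactOperator_commutator_iff hPsa hP2 hQsa,
    ← ContinuousLinearMap.isCompactOperator_mul_star_iff,
    mul_mul_one_sub_mul_star hPsa hP2 hQsa hQ2]
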